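/- For a population of N individuals of m types with counts N_1,...,N_m (each N_i ≥ 1, Σ N_i = N), drawing independent samples of size g without replacement (each sample drawn from the full population), the expected number of samples needed to observe every type equals Σ_{∅≠S⊆{1,...,m}} (-1)^{|S|+1}/(1 − P(N − Σ_{i∈S} N_i, g)/P(N,g)), where P(n,k) = n(n−1)···(n−k+1) (with the convention P(n,k)=0 if n < k). -/

import Mathlib

open Finset MeasureTheory ProbabilityTheory
open scoped ENNReal

/-!
Let `E n` be the event that every type occurs among the first `n` samples, so that `X` is the
hitting time of the increasing sequence `E n` and `𝔼[X] = ∑ₙ P((E n)ᶜ)`. The complement `(E n)ᶜ`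
is the union over the types `i` of the events "type `i` is missed by samples `1, …, n`"; by
independence, the intersection of these events over `i ∈ S` has probability `q(S)ⁿ`. Inclusion–
exclusion and summation of the geometric series `∑ₙ q(S)ⁿ = 1 / (1 - q(S))` give the formula.

The samples are not assumed to be measurable, so events are only null measurable: a uniformly
distributed map with finitely many values has null-measurable preimages because the outer measures
of its fibres already add up to `1`.
-/

theorem Nat.choose_lt_choose_of_lt {a b c : ℕ} (hab : a < b) (hc : 1 ≤ c) (hcb : c ≤ b) :
    a.choose c < b.choose c := by
  obtain ⟨b, rfl⟩ : ∃ b', b = b' + 1 := ⟨b - 1, by omega⟩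
  obtain ⟨c, rfl⟩ : ∃ c', c = c' + 1 := ⟨c - 1, by omega⟩
  calc a.choose (c + 1) ≤ b.choose (c + 1) := Nat.choose_le_choose _ (by omega)
    _ < (b + 1).choose (c + 1) := by
      rw [Nat.choose_succ_succ']
      have := Nat.choose_pos (show c ≤ b by omega)
      omega

theorem Nat.cast_choose_div_cast_choose (a b c : ℕ) :
    (a.choose c : ℝ) / b.choose c = a.descFactorial c / b.descFactorial c := by
  simp only [Nat.descFactorial_eq_factorial_mul_choose, Nat.cast_mul]
  rw [mul_div_mul_left _ _ (by positivity)]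

theorem Finset.powersetCard_inter {α : Type*} [DecidableEq α] (n : ℕ) (s t : Finset α) :
    (s ∩ t).powersetCard n = (s.powersetCard n).filter (· ⊆ t) := by
  ext A
  simp only [mem_powersetCard, mem_filter, subset_inter_iff]
  tauto

namespace MeasureTheory

variable {Ω : Type*} [MeasurableSpace Ω] {μ : Measure Ω}

theorem nullMeasurableSet_of_measure_add_measure_compl_le [IsFiniteMeasure μ] {s : Set Ω}
    (h : μ s + μ sᶜ ≤ μ Set.univ) : NullMeasurableSet s μ := by
  set B := toMeasurable μ s
  set C := toMeasurable μ sᶜ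
  have hsB : s ⊆ B := subset_toMeasurable μ s
  have hsC : sᶜ ⊆ C := subset_toMeasurable μ sᶜ
  have hBC : B ∪ C = Set.univ :=
    Set.eq_univ_of_forall fun ω => (em (ω ∈ s)).imp (hsB ·) (hsC ·)
  have hBC_null : μ (B ∩ C) = 0 := by
    have hadd := measure_union_add_inter (μ := μ) B (measurableSet_toMeasurable μ sᶜ)
    rw [hBC, measure_toMeasurable, measure_toMeasurable] at hadd
    have : μ Set.univ + μ (B ∩ C) ≤ μ Set.univ + 0 := by rw [add_zero]; exact hadd.le.trans h
    exact nonpos_iff_eq_zero.1 ((ENNReal.add_le_add_iff_left (measure_ne_top μ _)).1 this)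
  refine (measurableSet_toMeasurable μ s).nullMeasurableSet.congr ?_
  rw [ae_eq_set]
  constructor
  · exact measure_mono_null (fun ω (hω : ω ∈ B \ s) => (⟨hω.1, hsC hω.2⟩ : ω ∈ B ∩ C)) hBC_null
  · rw [Set.sdiff_eq_empty.2 hsB, measure_empty]

theorem nullMeasurableSet_preimage_of_sum_measure_fiber_le [IsFiniteMeasure μ] {α : Type*}
    {f : Ω → α} {s : Finset α} (hf : ∀ ω, f ω ∈ s)
    (h : ∑ a ∈ s, μ (f ⁻¹' {a}) ≤ μ Set.univ) (B : Set α) :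
    NullMeasurableSet (f ⁻¹' B) μ := by
  classical
  have hfiber : ∀ a ∈ s, NullMeasurableSet (f ⁻¹' {a}) μ := by
    intro a ha
    refine nullMeasurableSet_of_measure_add_measure_compl_le (le_trans ?_ h)
    rw [← add_sum_erase s _ ha]
    gcongr
    refine (measure_mono fun ω hω => ?_).trans (measure_biUnion_finset_le (s.erase a) _)
    exact Set.mem_biUnion (mem_erase.2 ⟨hω, hf ω⟩) rfl
  have hB : f ⁻¹' B = ⋃ a ∈ s.filter (· ∈ B), f ⁻¹' {a} := by
    ext ω
    simp [hf ω]
  rw [hB]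
  exact .biUnion (Finset.countable_toSet _) fun a ha => hfiber a (mem_filter.1 ha).1

theorem nullMeasurableSet_preimage_of_uniform [IsProbabilityMeasure μ] {α : Type*}
    {f : Ω → α} {s : Finset α} (hf : ∀ ω, f ω ∈ s)
    (hunif : ∀ a ∈ s, μ (f ⁻¹' {a}) = (#s : ℝ≥0∞)⁻¹)
    (B : Set α) : NullMeasurableSet (f ⁻¹' B) μ := by
  obtain ⟨ω⟩ := nonempty_of_isProbabilityMeasure μ
  have hs : (#s : ℝ≥0∞) ≠ 0 := by simpa using Finset.ne_empty_of_mem (hf ω)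
  refine nullMeasurableSet_preimage_of_sum_measure_fiber_le hf (le_of_eq ?_) B
  rw [sum_congr rfl hunif, sum_const, nsmul_eq_mul, ENNReal.mul_inv_cancel hs (by simp),
    measure_univ]

theorem measure_preimage_of_uniform [IsProbabilityMeasure μ] {α : Type*}
    {f : Ω → α} {s : Finset α} (hf : ∀ ω, f ω ∈ s)
    (hunif : ∀ a ∈ s, μ (f ⁻¹' {a}) = (#s : ℝ≥0∞)⁻¹)
    (B : Set α) [DecidablePred (· ∈ B)] :
    μ (f ⁻¹' B) = #(s.filter (· ∈ B)) / #s := by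
  have hB : f ⁻¹' B = ⋃ a ∈ s.filter (· ∈ B), f ⁻¹' {a} := by
    ext ω
    simp [hf ω]
  rw [hB, measure_biUnion_finset₀, sum_congr rfl fun a ha => hunif a (mem_filter.1 ha).1,
    sum_const, nsmul_eq_mul, div_eq_mul_inv]
  · exact fun a _ b _ hab => (Disjoint.preimage f (Set.disjoint_singleton.2 hab)).aedisjoint
  · exact fun a _ => nullMeasurableSet_preimage_of_uniform hf hunif {a}

theorem measureReal_biUnion_eq_sum_powerset₀ {ι : Type*} {t : Finset ι} {s : ι → Set Ω}
    (hs : ∀ i ∈ t, NullMeasurableSet (s i) μ) (hf : ∀ i ∈ t, μ (s i) ≠ ∞ := by finiteness) :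
    μ.real (⋃ i ∈ t, s i) = ∑ u ∈ t.powerset with u.Nonempty,
      (-1 : ℝ) ^ (#u + 1) * μ.real (⋂ i ∈ u, s i) :=
  measureReal_biUnion_eq_sum_powerset (μ := μ.completion) hs hf

theorem lintegral_natCast_eq_tsum_measure_lt {T : Ω → ℕ}
    (hT : ∀ n, NullMeasurableSet {ω | n < T ω} μ) :
    ∫⁻ ω, (T ω : ℝ≥0∞) ∂μ = ∑' n, μ {ω | n < T ω} := by
  have hpt : ∀ ω, (T ω : ℝ≥0∞) = ∑' n, {ω | n < T ω}.indicator 1 ω := by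
    intro ω
    rw [tsum_eq_sum (s := range (T ω)) fun n hn => by simp_all,
      sum_congr rfl fun n hn => Set.indicator_of_mem (s := {ω | n < T ω}) (mem_range.1 hn) 1]
    simp
  simp_rw [hpt]
  rw [lintegral_tsum (f := fun n => {ω | n < T ω}.indicator 1)
    fun n => aemeasurable_one.indicator₀ (hT n)]
  simp_rw [lintegral_indicator_one₀ (hT _)]

theorem integral_natCast_eq_tsum_measureReal_lt [IsFiniteMeasure μ] {T : Ω → ℕ}
    (hT : ∀ n, NullMeasurableSet {ω | n < T ω} μ) :
    ∫ ω, (T ω : ℝ) ∂μ = ∑' n, μ.real {ω | n < T ω} := by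
  have hTm : NullMeasurable T μ := measurable_of_Ioi (δ := NullMeasurableSpace Ω μ) hT
  rw [integral_eq_lintegral_of_nonneg_ae (.of_forall fun ω => Nat.cast_nonneg _)
    (measurable_from_top.comp_aemeasurable hTm.aemeasurable).aestronglyMeasurable]
  simp_rw [ENNReal.ofReal_natCast]
  rw [lintegral_natCast_eq_tsum_measure_lt hT, ENNReal.tsum_toReal_eq fun n => measure_ne_top μ _]
  rfl

theorem integral_hittingTime_eq_tsum [IsFiniteMeasure μ] {E : ℕ → Set Ω} (hE : Monotone E)
    (hnm : ∀ n, NullMeasurableSet (E n) μ) (hsum : Summable fun n => μ.real (E n)ᶜ)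
    {T : Ω → ℕ} (hT : ∀ ω, T ω = sInf {n | ω ∈ E n}) :
    ∫ ω, (T ω : ℝ) ∂μ = ∑' n, μ.real (E n)ᶜ := by
  -- Off `⋃ n, E n` the junk value `T = sInf ∅ = 0` is wrong, but that set is null.
  have hnever : μ (⋂ n, (E n)ᶜ) = 0 := by
    rw [← measureReal_eq_zero_iff]
    exact le_antisymm (ge_of_tendsto' hsum.tendsto_atTop_zero
      fun n => measureReal_mono (Set.iInter_subset _ n)) measureReal_nonneg
  have hlt : ∀ n, {ω | n < T ω} =ᵐ[μ] (E n)ᶜ := by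
    intro n
    filter_upwards [measure_eq_zero_iff_ae_notMem.1 hnever] with ω hω
    obtain ⟨k, hk⟩ : ∃ k, ω ∈ E k := by simpa using hω
    have hmem : ω ∈ E (T ω) := by rw [hT ω]; exact Nat.sInf_mem (s := {n | ω ∈ E n}) ⟨k, hk⟩
    have hle : T ω ≤ n ↔ ω ∈ E n := ⟨fun h => hE h hmem, fun h => hT ω ▸ Nat.sInf_le h⟩
    exact propext (not_le.symm.trans (not_congr hle))
  rw [integral_natCast_eq_tsum_measureReal_lt fun n => (hnm n).compl.congr (hlt n).symm]
  exact tsum_congr fun n => measureReal_congr (hlt n)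

end MeasureTheory

namespace ProbabilityTheory

variable {Ω : Type*} [MeasurableSpace Ω] {μ : Measure Ω}

theorem integral_coverTime_eq_sum_powerset [IsFiniteMeasure μ] {ι β : Type*} [Fintype ι]
    [Nonempty ι] {G : ℕ → Ω → β} {hit : ι → Set β}
    (hindep : iIndepFun (m := fun _ => (⊤ : MeasurableSpace β)) G μ)
    (hnm : ∀ k, 1 ≤ k → ∀ i, NullMeasurableSet (G k ⁻¹' hit i) μ)
    {q : Finset ι → ℝ} (hq : ∀ S k, 1 ≤ k → μ.real (G k ⁻¹' ⋂ i ∈ S, (hit i)ᶜ) = q S)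
    (hq1 : ∀ S : Finset ι, S.Nonempty → q S < 1) {T : Ω → ℕ}
    (hT : ∀ ω, T ω = sInf {n | 1 ≤ n ∧ ∀ i, ∃ k, 1 ≤ k ∧ k ≤ n ∧ G k ω ∈ hit i}) :
    ∫ ω, (T ω : ℝ) ∂μ =
      ∑ S ∈ univ.powerset.filter Finset.Nonempty, (-1 : ℝ) ^ (#S + 1) / (1 - q S) := by
  classical
  set E : ℕ → Set Ω := fun n => {ω | ∀ i, ∃ k, 1 ≤ k ∧ k ≤ n ∧ G k ω ∈ hit i}
  set F : ℕ → ι → Set Ω := fun n i => ⋂ k ∈ Icc 1 n, G k ⁻¹' (hit i)ᶜ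
  have hEc : ∀ n, (E n)ᶜ = ⋃ i ∈ univ, F n i := by
    intro n
    ext ω
    simp [E, F]
  have hFnm : ∀ n i, NullMeasurableSet (F n i) μ := fun n i =>
    .biInter (Icc 1 n).countable_toSet fun k hk => (hnm k (mem_Icc.1 hk).1 i).compl
  have hF : ∀ n S, μ.real (⋂ i ∈ S, F n i) = q S ^ n := by
    intro n S
    have : ⋂ i ∈ S, F n i = ⋂ k ∈ Icc 1 n, G k ⁻¹' ⋂ i ∈ S, (hit i)ᶜ := by
      ext ω
      simp only [F, Set.mem_iInter, Set.mem_preimage]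
      tauto
    rw [this, measureReal_def, hindep.measure_inter_preimage_eq_mul _ fun _ _ => trivial,
      ENNReal.toReal_prod]
    simp_rw [← measureReal_def]
    rw [prod_congr rfl fun k hk => hq S k (mem_Icc.1 hk).1]
    simp
  have htail : ∀ n, μ.real (E n)ᶜ =
      ∑ S ∈ univ.powerset.filter Finset.Nonempty, (-1 : ℝ) ^ (#S + 1) * q S ^ n := by
    intro n
    rw [hEc, measureReal_biUnion_eq_sum_powerset₀ fun i _ => hFnm n i]
    simp_rw [hF]
  have hq0 : ∀ S, 0 ≤ q S := fun S => hq S 1 le_rfl ▸ measureReal_nonneg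
  have hsum : HasSum (fun n => μ.real (E n)ᶜ)
      (∑ S ∈ univ.powerset.filter Finset.Nonempty, (-1 : ℝ) ^ (#S + 1) / (1 - q S)) := by
    simp_rw [htail, div_eq_mul_inv]
    exact hasSum_sum fun S hS =>
      (hasSum_geometric_of_lt_one (hq0 S) (hq1 S (mem_filter.1 hS).2)).mul_left _
  have hT' : ∀ ω, T ω = sInf {n | ω ∈ E n} := by
    intro ω
    rw [hT ω]
    congr 1
    refine Set.ext fun n => and_iff_right_of_imp fun h => ?_
    obtain ⟨k, hk1, hkn, -⟩ := h (Classical.arbitrary ι)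
    omega
  have hE : Monotone E := fun a b hab ω hω i =>
    (hω i).imp fun k hk => ⟨hk.1, hk.2.1.trans hab, hk.2.2⟩
  have hEnm : ∀ n, NullMeasurableSet (E n) μ := fun n =>
    .of_compl (hEc n ▸ .biUnion (Finset.countable_toSet _) fun i _ => hFnm n i)
  rw [integral_hittingTime_eq_tsum hE hEnm hsum.summable hT', hsum.tsum_eq]

end ProbabilityTheory

/-- Expected number of independent samples of size `g`, drawn without replacement from a
population of `N` individuals of `m` types with counts `N₁,...,N_m ≥ 1`, needed to
observe every type: it equals
`∑_{∅≠S⊆{1,...,m}} (-1)^(|S|+1)/(1 - P(N - ∑_{i∈S} Nᵢ, g)/P(N,g))`,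
where `P(n,k)` is the falling factorial. -/
theorem stmt_14 {Ω : Type*} [MeasurableSpace Ω] (μ : Measure Ω) [IsProbabilityMeasure μ]
    {N m g : ℕ} (hm : 0 < m) (hg1 : 1 ≤ g) (hgN : g < N)
    (t : Fin N → Fin m) (Nc : Fin m → ℕ)
    (hNc : ∀ i, Nc i = ((Finset.univ : Finset (Fin N)).filter (fun x => t x = i)).card)
    (hNc1 : ∀ i, 1 ≤ Nc i)
    (G : ℕ → Ω → Finset (Fin N)) (hcard : ∀ n ω, (G n ω).card = g)
    (hindep : iIndepFun (m := fun _ => (⊤ : MeasurableSpace (Finset (Fin N)))) G μ)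
    (hunif : ∀ n, 1 ≤ n → ∀ A : Finset (Fin N), A.card = g →
      μ {ω | G n ω = A} = ENNReal.ofReal (1 / (N.choose g)))
    (X : Ω → ℕ)
    (hX : ∀ ω, X ω = sInf {n | 1 ≤ n ∧ ∀ i : Fin m, ∃ k, 1 ≤ k ∧ k ≤ n ∧
      ∃ x ∈ G k ω, t x = i}) :
    ∫ ω, (X ω : ℝ) ∂μ =
      ∑ S ∈ ((Finset.univ : Finset (Fin m)).powerset.filter Finset.Nonempty),
        (-1 : ℝ) ^ (S.card + 1) /
          (1 - (Nat.descFactorial (N - ∑ i ∈ S, Nc i) g : ℝ) /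
            (Nat.descFactorial N g : ℝ)) := by
  classical
  have hsample : ∀ k ω, G k ω ∈ powersetCard g (univ : Finset (Fin N)) := fun k ω =>
    mem_powersetCard.2 ⟨subset_univ _, hcard k ω⟩
  have hfiber : ∀ k, 1 ≤ k → ∀ A ∈ powersetCard g (univ : Finset (Fin N)),
      μ (G k ⁻¹' {A}) = (#(powersetCard g (univ : Finset (Fin N))) : ℝ≥0∞)⁻¹ := by
    intro k hk A hA
    rw [card_powersetCard, card_univ, Fintype.card_fin, ← ENNReal.ofReal_natCast,
      ← ENNReal.ofReal_inv_of_pos (by exact_mod_cast Nat.choose_pos hgN.le), ← one_div]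
    exact hunif k hk A (mem_powersetCard.1 hA).2
  have hq : ∀ (S : Finset (Fin m)) k, 1 ≤ k →
      μ.real (G k ⁻¹' ⋂ i ∈ S, {A | ∃ x ∈ A, t x = i}ᶜ) =
        (Nat.descFactorial (N - ∑ i ∈ S, Nc i) g : ℝ) / Nat.descFactorial N g := by
    intro S k hk
    have hB : ⋂ i ∈ S, {A : Finset (Fin N) | ∃ x ∈ A, t x = i}ᶜ =
        {A | A ⊆ univ.filter (t · ∉ S)} := by
      ext A
      simp only [Set.mem_iInter, Set.mem_compl_iff, Set.mem_ofPred_eq, not_exists, not_and,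
        subset_iff, mem_filter, mem_univ, true_and]
      exact ⟨fun h x hx hS => h _ hS x hx rfl, fun h i hi x hx hti => h hx (hti ▸ hi)⟩
    have hU : #(univ.filter (t · ∉ S)) = N - ∑ i ∈ S, Nc i := by
      rw [filter_not, card_univ_sdiff, Fintype.card_fin, ← sum_card_fiberwise_eq_card_filter]
      simp [hNc]
    rw [hB, measureReal_def, measure_preimage_of_uniform (hsample k) (hfiber k hk)]
    simp only [Set.mem_ofPred_eq]
    rw [← powersetCard_inter, univ_inter, card_powersetCard, card_powersetCard, hU, card_univ,
      Fintype.card_fin, ENNReal.toReal_div]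
    simpa using Nat.cast_choose_div_cast_choose _ _ _
  have hq1 : ∀ S : Finset (Fin m), S.Nonempty →
      (Nat.descFactorial (N - ∑ i ∈ S, Nc i) g : ℝ) / Nat.descFactorial N g < 1 := by
    rintro S ⟨i, hi⟩
    have : 1 ≤ ∑ i ∈ S, Nc i := (hNc1 i).trans (single_le_sum (fun _ _ => Nat.zero_le _) hi)
    rw [← Nat.cast_choose_div_cast_choose, div_lt_one (by exact_mod_cast Nat.choose_pos hgN.le)]
    exact_mod_cast Nat.choose_lt_choose_of_lt (by omega) hg1 hgN.le
  have : Nonempty (Fin m) := ⟨⟨0, hm⟩⟩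
  exact integral_coverTime_eq_sum_powerset (hit := fun i => {A | ∃ x ∈ A, t x = i}) hindep
    (fun k hk i => nullMeasurableSet_preimage_of_uniform (hsample k) (hfiber k hk) _) hq hq1 hX
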